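/- For every p-Banach operator ideal (A, **A**) (0 < p ≤ 1), the conjugate ideal of A dominates the adjoint: A^Δ ⊆ A* with **A***(T) ≤ **A**^Δ(T) for all T; consequently A^{*Δ} ⊆ A^{ΔΔ} with **A**^{ΔΔ}(T) ≤ **A**^{*Δ}(T). -/

import Mathlib

noncomputable section

open scoped Classical

universe u

/-- A bundled Banach space over `ℝ`. -/
structure BanachSpc : Type (u + 1) where
  carrier : Type u
  [grp : NormedAddCommGroup carrier]
  [mod : NormedSpace ℝ carrier]
  [cpl : CompleteSpace carrier]

attribute [instance] BanachSpc.grp BanachSpc.mod BanachSpc.cpl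

instance : CoeSort BanachSpc.{u} (Type u) := ⟨BanachSpc.carrier⟩

/-- The data of an operator ideal: a class of operators together with an ideal "norm". -/
structure OperatorIdeal : Type (u + 1) where
  mem : ∀ (E F : BanachSpc.{u}), (E.carrier →L[ℝ] F.carrier) → Prop
  nrm : ∀ (E F : BanachSpc.{u}), (E.carrier →L[ℝ] F.carrier) → ℝ

/-- A finite rank (finite) operator. -/
def FinRankOp {E F : BanachSpc.{u}} (T : E.carrier →L[ℝ] F.carrier) : Prop :=
  FiniteDimensional ℝ (LinearMap.range (T : E.carrier →ₗ[ℝ] F.carrier))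

/-- The trace of a (finite rank) operator, computed as the trace of the induced
endomorphism of its range. -/
noncomputable def fTrace {E : BanachSpc.{u}} (T : E.carrier →L[ℝ] E.carrier) : ℝ :=
  LinearMap.trace ℝ (LinearMap.range (T : E.carrier →ₗ[ℝ] E.carrier))
    ((T : E.carrier →ₗ[ℝ] E.carrier).restrict
      (p := LinearMap.range (T : E.carrier →ₗ[ℝ] E.carrier))
      (q := LinearMap.range (T : E.carrier →ₗ[ℝ] E.carrier))
      (fun x _ => LinearMap.mem_range_self _ x))

/-- `IsPBanachIdeal p A` : `A` is a `p`-Banach operator ideal (`0 < p ≤ 1`). -/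
structure IsPBanachIdeal (p : ℝ) (A : OperatorIdeal.{u}) : Prop where
  p_pos : 0 < p
  p_le_one : p ≤ 1
  finrank_mem : ∀ (E F : BanachSpc.{u}) (T : E.carrier →L[ℝ] F.carrier), FinRankOp T → A.mem E F T
  nonneg : ∀ (E F : BanachSpc.{u}) (T : E.carrier →L[ℝ] F.carrier), 0 ≤ A.nrm E F T
  opnorm_le : ∀ (E F : BanachSpc.{u}) (T : E.carrier →L[ℝ] F.carrier), A.mem E F T → ‖T‖ ≤ A.nrm E F T
  rank_one_le : ∀ (E F : BanachSpc.{u}) (a : E.carrier →L[ℝ] ℝ) (y : F.carrier),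
    A.nrm E F (a.smulRight y) ≤ ‖a‖ * ‖y‖
  smul_mem : ∀ (E F : BanachSpc.{u}) (c : ℝ) (T : E.carrier →L[ℝ] F.carrier),
    A.mem E F T → A.mem E F (c • T)
  nrm_smul : ∀ (E F : BanachSpc.{u}) (c : ℝ) (T : E.carrier →L[ℝ] F.carrier),
    A.mem E F T → A.nrm E F (c • T) = |c| * A.nrm E F T
  add_mem : ∀ (E F : BanachSpc.{u}) (S T : E.carrier →L[ℝ] F.carrier),
    A.mem E F S → A.mem E F T → A.mem E F (S + T)
  p_triangle : ∀ (E F : BanachSpc.{u}) (S T : E.carrier →L[ℝ] F.carrier),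
    A.mem E F S → A.mem E F T →
    A.nrm E F (S + T) ^ p ≤ A.nrm E F S ^ p + A.nrm E F T ^ p
  comp_mem : ∀ (E F G H : BanachSpc.{u}) (R : E.carrier →L[ℝ] F.carrier)
    (T : F.carrier →L[ℝ] G.carrier) (S : G.carrier →L[ℝ] H.carrier),
    A.mem F G T → A.mem E H (S.comp (T.comp R))
  comp_le : ∀ (E F G H : BanachSpc.{u}) (R : E.carrier →L[ℝ] F.carrier)
    (T : F.carrier →L[ℝ] G.carrier) (S : G.carrier →L[ℝ] H.carrier),
    A.mem F G T → A.nrm E H (S.comp (T.comp R)) ≤ ‖S‖ * A.nrm F G T * ‖R‖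
  complete : ∀ (E F : BanachSpc.{u}) (f : ℕ → (E.carrier →L[ℝ] F.carrier)),
    (∀ n, A.mem E F (f n)) →
    (∀ ε > (0 : ℝ), ∃ N : ℕ, ∀ m ≥ N, ∀ n ≥ N, A.nrm E F (f m - f n) ^ p < ε) →
    ∃ T, A.mem E F T ∧ ∀ ε > (0 : ℝ), ∃ N : ℕ, ∀ n ≥ N, A.nrm E F (f n - T) ^ p < ε

namespace OperatorIdeal

/-- The product ideal `A ∘ B`. -/
def prod (A B : OperatorIdeal.{u}) : OperatorIdeal.{u} where
  mem E F T := ∃ (G : BanachSpc.{u}) (R : E.carrier →L[ℝ] G.carrier)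
    (S : G.carrier →L[ℝ] F.carrier), B.mem E G R ∧ A.mem G F S ∧ T = S.comp R
  nrm E F T := sInf { r : ℝ | ∃ (G : BanachSpc.{u}) (R : E.carrier →L[ℝ] G.carrier)
    (S : G.carrier →L[ℝ] F.carrier), B.mem E G R ∧ A.mem G F S ∧ T = S.comp R ∧
    r = A.nrm G F S * B.nrm E G R }

/-- The right-`B`-quotient `A ∘ B⁻¹`. -/
def rightQuotient (A B : OperatorIdeal.{u}) : OperatorIdeal.{u} where
  mem E F T := ∀ (G : BanachSpc.{u}) (S : G.carrier →L[ℝ] E.carrier),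
    B.mem G E S → A.mem G F (T.comp S)
  nrm E F T := sSup { r : ℝ | ∃ (G : BanachSpc.{u}) (S : G.carrier →L[ℝ] E.carrier),
    B.mem G E S ∧ B.nrm G E S = 1 ∧ r = A.nrm G F (T.comp S) }

/-- The conjugate ideal `A^Δ`, defined by trace duality against finite rank operators. -/
def conj (A : OperatorIdeal.{u}) : OperatorIdeal.{u} where
  mem E F T := ∃ c : ℝ, 0 ≤ c ∧ ∀ L : F.carrier →L[ℝ] E.carrier, FinRankOp L →
    |fTrace (T.comp L)| ≤ c * A.nrm F E L
  nrm E F T := sInf { c : ℝ | 0 ≤ c ∧ ∀ L : F.carrier →L[ℝ] E.carrier, FinRankOp L →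
    |fTrace (T.comp L)| ≤ c * A.nrm F E L }

/-- The adjoint ideal `A*`. -/
def adj (A : OperatorIdeal.{u}) : OperatorIdeal.{u} where
  mem E F T := ∃ c : ℝ, 0 ≤ c ∧ ∀ (E₀ F₀ : BanachSpc.{u})
    (B : E₀.carrier →L[ℝ] E.carrier) (S : F₀.carrier →L[ℝ] E₀.carrier)
    (A₀ : F.carrier →L[ℝ] F₀.carrier), FinRankOp B → FinRankOp A₀ → A.mem F₀ E₀ S →
    |fTrace (T.comp (B.comp (S.comp A₀)))| ≤ c * ‖B‖ * A.nrm F₀ E₀ S * ‖A₀‖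
  nrm E F T := sInf { c : ℝ | 0 ≤ c ∧ ∀ (E₀ F₀ : BanachSpc.{u})
    (B : E₀.carrier →L[ℝ] E.carrier) (S : F₀.carrier →L[ℝ] E₀.carrier)
    (A₀ : F.carrier →L[ℝ] F₀.carrier), FinRankOp B → FinRankOp A₀ → A.mem F₀ E₀ S →
    |fTrace (T.comp (B.comp (S.comp A₀)))| ≤ c * ‖B‖ * A.nrm F₀ E₀ S * ‖A₀‖ }

/-- The ideal of approximable operators, with the operator norm. -/
def approx : OperatorIdeal.{u} where
  mem E F T := ∀ ε > (0 : ℝ), ∃ L : E.carrier →L[ℝ] F.carrier, FinRankOp L ∧ ‖T - L‖ < ε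
  nrm E F T := ‖T‖

/-- The minimal kernel `A^min = F̄ ∘ A ∘ F̄`. -/
def minKer (A : OperatorIdeal.{u}) : OperatorIdeal.{u} :=
  OperatorIdeal.prod approx (OperatorIdeal.prod A approx)

/-- The injective hull `A^inj` : `T ∈ A^inj` iff `J ∘ T ∈ A` for some metric injection `J`,
with the induced infimum norm. -/
def injHull (A : OperatorIdeal.{u}) : OperatorIdeal.{u} where
  mem E F T := ∃ (G : BanachSpc.{u}) (J : F.carrier →L[ℝ] G.carrier),
    Isometry J ∧ A.mem E G (J.comp T)
  nrm E F T := sInf { r : ℝ | ∃ (G : BanachSpc.{u}) (J : F.carrier →L[ℝ] G.carrier),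
    Isometry J ∧ A.mem E G (J.comp T) ∧ r = A.nrm E G (J.comp T) }

end OperatorIdeal

/-- A finite dimensional subspace of a Banach space, as a Banach space. -/
def SubBanach (F : BanachSpc.{u}) (N : Submodule ℝ F.carrier)
    (hN : FiniteDimensional ℝ ↥N) : BanachSpc.{u} :=
  letI := hN; ⟨↥N⟩

/-- A quotient of a Banach space by a closed subspace, as a Banach space. -/
def QuotBanach (E : BanachSpc.{u}) (K : Submodule ℝ E.carrier)
    (hK : IsClosed (K : Set E.carrier)) : BanachSpc.{u} :=
  letI := hK; ⟨E.carrier ⧸ K⟩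

/-- The dual of a Banach space, as a Banach space. -/
def DualB (F : BanachSpc.{u}) : BanachSpc.{u} := ⟨StrongDual ℝ F.carrier⟩

/-- The bidual of a Banach space, as a Banach space. -/
def BidualB (F : BanachSpc.{u}) : BanachSpc.{u} := DualB (DualB F)

/-- Left accessibility of an operator ideal. -/
def LeftAccessible (A : OperatorIdeal.{u}) : Prop :=
  ∀ (E N : BanachSpc.{u}), FiniteDimensional ℝ N.carrier →
  ∀ (T : E.carrier →L[ℝ] N.carrier), ∀ ε > (0 : ℝ),
  ∃ (K : Submodule ℝ E.carrier) (hK : IsClosed (K : Set E.carrier))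
    (_ : FiniteDimensional ℝ (E.carrier ⧸ K))
    (S : (QuotBanach E K hK).carrier →L[ℝ] N.carrier),
    (∀ x : E.carrier, T x = S (Submodule.Quotient.mk x)) ∧
    A.nrm (QuotBanach E K hK) N S ≤ (1 + ε) * A.nrm E N T

/-- Right accessibility of an operator ideal. -/
def RightAccessible (A : OperatorIdeal.{u}) : Prop :=
  ∀ (M F : BanachSpc.{u}), FiniteDimensional ℝ M.carrier →
  ∀ (T : M.carrier →L[ℝ] F.carrier), ∀ ε > (0 : ℝ),
  ∃ (N : Submodule ℝ F.carrier) (hN : FiniteDimensional ℝ ↥N)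
    (S : M.carrier →L[ℝ] (SubBanach F N hN).carrier),
    (∀ x : M.carrier, T x = N.subtype (S x)) ∧
    A.nrm M (SubBanach F N hN) S ≤ (1 + ε) * A.nrm M F T

/-- Total accessibility of an operator ideal. -/
def TotallyAccessible (A : OperatorIdeal.{u}) : Prop :=
  ∀ (E F : BanachSpc.{u}) (T : E.carrier →L[ℝ] F.carrier), FinRankOp T → ∀ ε > (0 : ℝ),
  ∃ (K : Submodule ℝ E.carrier) (hK : IsClosed (K : Set E.carrier))
    (_ : FiniteDimensional ℝ (E.carrier ⧸ K))
    (N : Submodule ℝ F.carrier) (hN : FiniteDimensional ℝ ↥N)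
    (S : (QuotBanach E K hK).carrier →L[ℝ] (SubBanach F N hN).carrier),
    (∀ x : E.carrier, T x = N.subtype (S (Submodule.Quotient.mk x))) ∧
    A.nrm (QuotBanach E K hK) (SubBanach F N hN) S ≤ (1 + ε) * A.nrm E F T

/-- The `A`-extension property. -/
def ExtensionProperty (A : OperatorIdeal.{u}) : Prop :=
  ∀ ε > (0 : ℝ), ∀ (E G F : BanachSpc.{u}) (J : E.carrier →L[ℝ] G.carrier), Isometry J →
  ∀ (T : E.carrier →L[ℝ] F.carrier), A.mem E F T →
  ∃ Tt : G.carrier →L[ℝ] F.carrier, A.mem G F Tt ∧ (∀ x : E.carrier, T x = Tt (J x)) ∧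
    A.nrm G F Tt ≤ (1 + ε) * A.nrm E F T

/-- The principle of `A`-local reflexivity (`A`-LRP). -/
def LRPholds (A : OperatorIdeal.{u}) : Prop :=
  ∀ (M F : BanachSpc.{u}), FiniteDimensional ℝ M.carrier →
  ∀ (N : Submodule ℝ (StrongDual ℝ F.carrier)), FiniteDimensional ℝ ↥N →
  ∀ (T : M.carrier →L[ℝ] StrongDual ℝ (StrongDual ℝ F.carrier)), ∀ ε > (0 : ℝ),
  ∃ S : M.carrier →L[ℝ] F.carrier,
    A.nrm M F S ≤ (1 + ε) * (A.adj.adj).nrm M (BidualB F) T ∧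
    (∀ (x : M.carrier) (b : ↥N), (b : StrongDual ℝ F.carrier) (S x) = T x b) ∧
    (∀ x : M.carrier, T x ∈ Set.range (NormedSpace.inclusionInDoubleDual ℝ F.carrier) →
      NormedSpace.inclusionInDoubleDual ℝ F.carrier (S x) = T x)

/-- `A` is a maximal Banach ideal: `A = A** = (A*)*` isometrically. -/
def IsMaximalIdeal (A : OperatorIdeal.{u}) : Prop :=
  ∀ (E F : BanachSpc.{u}) (T : E.carrier →L[ℝ] F.carrier),
    (A.mem E F T ↔ (A.adj.adj).mem E F T) ∧ A.nrm E F T = (A.adj.adj).nrm E F T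

/-!
A constant `c` with `|tr (T L)| ≤ c 𝐀(L)` for all finite rank `L` is admissible for `A*`:
for finite rank `B`, `A₀` and `S ∈ A` the composite `B S A₀` has finite rank and
`𝐀(B S A₀) ≤ ‖B‖ 𝐀(S) ‖A₀‖`. This gives `A^Δ ⊆ A*` with `𝐀* ≤ 𝐀^Δ`. Finite rank operators
belong to `A^Δ`, since `|tr (L M)| ≤ c ‖M‖ ≤ c 𝐀(M)` (the trace on the finite-dimensional range
of `L` is a bounded functional), so `𝐀*(L) ≤ 𝐀^Δ(L)` for them; then every constant admissible
for `A^{*Δ}` is admissible for `A^{ΔΔ}`.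
-/

lemma FinRankOp.comp {E F G : BanachSpc.{u}} {T : F.carrier →L[ℝ] G.carrier}
    (hT : FinRankOp T) (R : E.carrier →L[ℝ] F.carrier) : FinRankOp (T.comp R) := by
  have : FiniteDimensional ℝ (LinearMap.range (T : F.carrier →ₗ[ℝ] G.carrier)) := hT
  exact Submodule.finiteDimensional_of_le (LinearMap.range_comp_le_range _ _)

lemma fTrace_eq_trace_restrict {E : BanachSpc.{u}} (S : E.carrier →L[ℝ] E.carrier)
    (V : Submodule ℝ E.carrier) [FiniteDimensional ℝ V]
    (hr : LinearMap.range (S : E.carrier →ₗ[ℝ] E.carrier) ≤ V) :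
    fTrace S = LinearMap.trace ℝ V ((S : E.carrier →ₗ[ℝ] E.carrier).restrict
      (p := V) (q := V) (fun x _ => hr (LinearMap.mem_range_self _ x))) := by
  set R := LinearMap.range (S : E.carrier →ₗ[ℝ] E.carrier)
  have : FiniteDimensional ℝ R := Submodule.finiteDimensional_of_le hr
  -- The two restrictions are `f ∘ j` and `j ∘ f` for the inclusion `j : R → V`.
  let j : R →ₗ[ℝ] V := Submodule.inclusion hr
  let f : V →ₗ[ℝ] R := ((S : E.carrier →ₗ[ℝ] E.carrier).comp V.subtype).codRestrict R
    (fun x => LinearMap.mem_range_self _ (x : E.carrier))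
  calc fTrace S = LinearMap.trace ℝ R (f ∘ₗ j) := rfl
    _ = LinearMap.trace ℝ V (j ∘ₗ f) := (LinearMap.trace_comp_comm' f j).symm
    _ = _ := rfl

lemma exists_abs_trace_le_opNorm (W : Type*) [NormedAddCommGroup W] [NormedSpace ℝ W]
    [FiniteDimensional ℝ W] : ∃ C, 0 ≤ C ∧ ∀ f : W →L[ℝ] W, |LinearMap.trace ℝ W f| ≤ C * ‖f‖ :=
  let τ : (W →L[ℝ] W) →L[ℝ] ℝ := LinearMap.toContinuousLinearMap
    ((LinearMap.trace ℝ W).comp (ContinuousLinearMap.coeLM ℝ))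
  ⟨‖τ‖, norm_nonneg τ, τ.le_opNorm⟩

lemma FinRankOp.exists_abs_fTrace_comp_le {E F : BanachSpc.{u}} {L : F.carrier →L[ℝ] E.carrier}
    (hL : FinRankOp L) :
    ∃ c, 0 ≤ c ∧ ∀ M : E.carrier →L[ℝ] F.carrier, |fTrace (L.comp M)| ≤ c * ‖M‖ := by
  set V := LinearMap.range (L : F.carrier →ₗ[ℝ] E.carrier)
  have : FiniteDimensional ℝ V := hL
  obtain ⟨C, hC, htr⟩ := exists_abs_trace_le_opNorm V
  refine ⟨C * ‖L‖, by positivity, fun M => ?_⟩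
  have hr : LinearMap.range ((L.comp M : E.carrier →L[ℝ] E.carrier) :
      E.carrier →ₗ[ℝ] E.carrier) ≤ V :=
    LinearMap.range_comp_le_range _ _
  let g : V →L[ℝ] V := ((L.comp M).comp V.subtypeL).codRestrict V
    (fun x => hr (LinearMap.mem_range_self _ (x : E.carrier)))
  have hg : ‖g‖ ≤ ‖L‖ * ‖M‖ := by
    refine g.opNorm_le_bound (by positivity) fun x => ?_
    calc ‖g x‖ = ‖L (M x)‖ := rfl
      _ ≤ ‖L‖ * (‖M‖ * ‖x‖) := L.le_opNorm_of_le (M.le_opNorm x)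
      _ = ‖L‖ * ‖M‖ * ‖x‖ := by ring
  calc |fTrace (L.comp M)| = |LinearMap.trace ℝ V g| := by
        rw [fTrace_eq_trace_restrict _ V hr]; rfl
    _ ≤ C * ‖g‖ := htr g
    _ ≤ C * (‖L‖ * ‖M‖) := by gcongr
    _ = C * ‖L‖ * ‖M‖ := by ring

/-- `conj` and `adj` both have membership `∃ c, 0 ≤ c ∧ P c` and norm `sInf {c | 0 ≤ c ∧ P c}`
for a predicate `P` of admissible constants. -/
lemma exists_nonneg_and_sInf_le_of_imp {P Q : ℝ → Prop} (hPQ : ∀ c, 0 ≤ c → P c → Q c)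
    (hP : ∃ c, 0 ≤ c ∧ P c) :
    (∃ c, 0 ≤ c ∧ Q c) ∧ sInf {c | 0 ≤ c ∧ Q c} ≤ sInf {c | 0 ≤ c ∧ P c} := by
  obtain ⟨c, hc, hPc⟩ := hP
  exact ⟨⟨c, hc, hPQ c hc hPc⟩,
    csInf_le_csInf ⟨0, fun _ h => h.1⟩ ⟨c, hc, hPc⟩ fun d hd => ⟨hd.1, hPQ d hd.1 hd.2⟩⟩

namespace OperatorIdeal

theorem conj_mem_and_nrm_le_of_nrm_le {B C : OperatorIdeal.{u}}
    (hBC : ∀ (E F : BanachSpc.{u}) (L : E.carrier →L[ℝ] F.carrier), FinRankOp L →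
      B.nrm E F L ≤ C.nrm E F L)
    {E F : BanachSpc.{u}} {T : E.carrier →L[ℝ] F.carrier} (hT : B.conj.mem E F T) :
    C.conj.mem E F T ∧ C.conj.nrm E F T ≤ B.conj.nrm E F T :=
  exists_nonneg_and_sInf_le_of_imp
    (fun _ hc hTc L hL => (hTc L hL).trans (mul_le_mul_of_nonneg_left (hBC F E L hL) hc)) hT

end OperatorIdeal

namespace IsPBanachIdeal

variable {p : ℝ} {A : OperatorIdeal.{u}} {E F : BanachSpc.{u}}

theorem conj_mem_of_finRankOp (hA : IsPBanachIdeal p A) {L : F.carrier →L[ℝ] E.carrier}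
    (hL : FinRankOp L) : A.conj.mem F E L := by
  obtain ⟨c, hc, hLc⟩ := hL.exists_abs_fTrace_comp_le
  exact ⟨c, hc, fun M hM => (hLc M).trans
    (mul_le_mul_of_nonneg_left (hA.opnorm_le E F M (hA.finrank_mem E F M hM)) hc)⟩

theorem adj_mem_and_nrm_le_of_conj_mem (hA : IsPBanachIdeal p A)
    {T : E.carrier →L[ℝ] F.carrier} (hT : A.conj.mem E F T) :
    A.adj.mem E F T ∧ A.adj.nrm E F T ≤ A.conj.nrm E F T :=
  exists_nonneg_and_sInf_le_of_imp (fun c hc hTc E₀ F₀ B S A₀ hB _ hS =>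
    calc |fTrace (T.comp (B.comp (S.comp A₀)))|
        ≤ c * A.nrm F E (B.comp (S.comp A₀)) := hTc _ (hB.comp _)
      _ ≤ c * (‖B‖ * A.nrm F₀ E₀ S * ‖A₀‖) := by
          gcongr; exact hA.comp_le F F₀ E₀ E A₀ S B hS
      _ = c * ‖B‖ * A.nrm F₀ E₀ S * ‖A₀‖ := by ring) hT

end IsPBanachIdeal

/-- `A^Δ ⊆ A*` with `𝐀*(T) ≤ 𝐀^Δ(T)`; consequently
`A^{*Δ} ⊆ A^{ΔΔ}` with `𝐀^{ΔΔ}(T) ≤ 𝐀^{*Δ}(T)`. -/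
theorem conj_subset_adj (p : ℝ) (A : OperatorIdeal.{u}) (hA : IsPBanachIdeal p A) :
    (∀ (E F : BanachSpc.{u}) (T : E.carrier →L[ℝ] F.carrier),
      A.conj.mem E F T → A.adj.mem E F T ∧ A.adj.nrm E F T ≤ A.conj.nrm E F T) ∧
    (∀ (E F : BanachSpc.{u}) (T : E.carrier →L[ℝ] F.carrier),
      (A.adj.conj).mem E F T →
        (A.conj.conj).mem E F T ∧ (A.conj.conj).nrm E F T ≤ (A.adj.conj).nrm E F T) := by
  have adj_of_conj : ∀ (E F : BanachSpc.{u}) (T : E.carrier →L[ℝ] F.carrier),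
      A.conj.mem E F T → A.adj.mem E F T ∧ A.adj.nrm E F T ≤ A.conj.nrm E F T :=
    fun _ _ _ => hA.adj_mem_and_nrm_le_of_conj_mem
  have adj_nrm_le_conj_nrm : ∀ (E F : BanachSpc.{u}) (L : E.carrier →L[ℝ] F.carrier),
      FinRankOp L → A.adj.nrm E F L ≤ A.conj.nrm E F L :=
    fun E F L hL => (adj_of_conj E F L (hA.conj_mem_of_finRankOp hL)).2
  exact ⟨adj_of_conj, fun _ _ _ => OperatorIdeal.conj_mem_and_nrm_le_of_nrm_le adj_nrm_le_conj_nrm⟩
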